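/- arXiv:1306.5154 — 4 statements merged into one kernel-verified Lean document; each statement's English description precedes it below -/
import Mathlib

section
/- The sum of the eccentricities of all vertices of the Fibonacci cube Γ_n equals (3F_n + 4nF_{n+1} + 3nF_n)/5, where F_k denotes the k-th Fibonacci number (F_0 = 0, F_1 = 1). -/
open Finset

/-- Number of positions where two binary strings differ. -/
def diffCount {n : ℕ} (u v : Fin n → Bool) : ℕ :=
  (Finset.univ.filter fun i => u i ≠ v i).card

/-- Fibonacci strings: binary strings with no two consecutive 1's. -/
def FibPred (n : ℕ) (v : Fin n → Bool) : Prop :=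
  ∀ i j : Fin n, (j : ℕ) = (i : ℕ) + 1 → ¬(v i = true ∧ v j = true)

instance (n : ℕ) : DecidablePred (FibPred n) := fun v => by
  unfold FibPred; infer_instance

/-- Vertices of the Fibonacci cube: Fibonacci strings of length n. -/
def FibV (n : ℕ) := {v : Fin n → Bool // FibPred n v}

instance (n : ℕ) : Fintype (FibV n) := Subtype.fintype _
instance (n : ℕ) : DecidableEq (FibV n) := Subtype.instDecidableEq

/-- The Fibonacci cube Γ_n: Fibonacci strings adjacent iff they differ in exactly one position. -/
def fibCube (n : ℕ) : SimpleGraph (FibV n) where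
  Adj u v := diffCount u.1 v.1 = 1
  symm := by
    constructor
    intro u v h
    have he : (Finset.univ.filter fun i => v.1 i ≠ u.1 i)
        = (Finset.univ.filter fun i => u.1 i ≠ v.1 i) := by
      apply Finset.filter_congr; intro i _; exact ne_comm
    simpa [diffCount, he] using h
  loopless := by constructor; intro u h; simp [diffCount] at h

instance (n : ℕ) : DecidableRel (fibCube n).Adj := fun u v => Nat.decEq _ _

/-- Eccentricity of a vertex in a finite graph: the maximum distance to any vertex. -/
noncomputable def gecc {V : Type*} [Fintype V] (G : SimpleGraph V) (u : V) : ℕ :=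
  Finset.univ.sup (G.dist u)


/-!
The Fibonacci strings form a lower set of the Boolean cube, so from any Fibonacci string one can
step, inside the set, one coordinate towards any other: first switch off a 1 the target lacks, and
once there is none, switch on a missing 1. Hence Γ_n is isometric in Q_n, and ecc(u) is the largest
Hamming distance from u to a Fibonacci string. Reading u from the left, this is attained greedily:
a 1 is answered by 0, a block 0b by 10, a final 0 by 1. Splitting the Fibonacci strings of length
n + 2 into 0·(length n + 1) and 10·(length n) gives linear recurrences for the sums of ecc(u) and
of ecc(0u), which are solved by induction.
-/

open Function

theorem hammingDist_update_add_one {ι : Type*} [Fintype ι] [DecidableEq ι] {β : ι → Type*}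
    [∀ i, DecidableEq (β i)] {x y : ∀ i, β i} {i : ι} (h : x i ≠ y i) :
    hammingDist (update x i (y i)) y + 1 = hammingDist x y := by
  have : ({j | update x i (y i) j ≠ y j} : Finset ι) =
      ({j | x j ≠ y j} : Finset ι).erase i := by
    ext j
    rcases eq_or_ne j i with rfl | hj <;> simp [*]
  rw [hammingDist, hammingDist, this, card_erase_add_one (by simpa using h)]

theorem hammingDist_self_update {ι : Type*} [Fintype ι] [DecidableEq ι] {β : ι → Type*}
    [∀ i, DecidableEq (β i)] {x : ∀ i, β i} {i : ι} {b : β i} (h : x i ≠ b) :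
    hammingDist x (update x i b) = 1 := by
  have := hammingDist_update_add_one (x := x) (y := update x i b) (i := i) (by simpa using h)
  simpa using this.symm

theorem IsLowerSet.exists_update_mem {ι : Type*} [DecidableEq ι] {s : Set (ι → Bool)}
    (hs : IsLowerSet s) {u v : ι → Bool} (hu : u ∈ s) (hv : v ∈ s) (huv : u ≠ v) :
    ∃ i, u i ≠ v i ∧ update u i (v i) ∈ s := by
  by_cases hdrop : ∃ i, u i = true ∧ v i = false
  · obtain ⟨i, hui, hvi⟩ := hdrop
    refine ⟨i, by simp [hui, hvi], hs (update_le_self_iff.mpr ?_) hu⟩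
    simp [hvi]
  · have hle : u ≤ v := fun i => by
      cases hui : u i <;> cases hvi : v i <;> simp_all
    obtain ⟨i, hi⟩ := Function.ne_iff.mp huv
    exact ⟨i, hi, hs (update_le_iff.mpr ⟨le_rfl, fun j _ => hle j⟩) hv⟩

theorem List.exists_ofFn_eq {α : Type*} {n : ℕ} {l : List α} (h : l.length = n) :
    ∃ f : Fin n → α, List.ofFn f = l := by
  subst h
  exact ⟨l.get, List.ofFn_get l⟩

namespace FibonacciCube

theorem isLowerSet_fibPred (n : ℕ) : IsLowerSet {v | FibPred n v} := by
  intro a b hba ha i j hij ⟨hi, hj⟩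
  exact ha i j hij
    ⟨(Bool.le_true _).antisymm (hi ▸ hba i), (Bool.le_true _).antisymm (hj ▸ hba j)⟩

variable {n : ℕ}

theorem hammingDist_le_length {u v : FibV n} (p : (fibCube n).Walk u v) :
    hammingDist u.1 v.1 ≤ p.length := by
  induction p with
  | nil => simp
  | @cons u v w h _ ih =>
    have huv : hammingDist u.1 v.1 = 1 := h
    rw [SimpleGraph.Walk.length_cons]
    exact (hammingDist_triangle u.1 v.1 w.1).trans (by omega)

theorem exists_walk_length_eq_hammingDist (u v : FibV n) :
    ∃ p : (fibCube n).Walk u v, p.length = hammingDist u.1 v.1 := by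
  induction h : hammingDist u.1 v.1 generalizing u with
  | zero =>
    obtain rfl := Subtype.ext (hammingDist_eq_zero.mp h)
    exact ⟨.nil, rfl⟩
  | succ d ih =>
    obtain ⟨i, hi, hw⟩ := (isLowerSet_fibPred n).exists_update_mem u.2 v.2
      (hammingDist_ne_zero.mp (by omega))
    let w : FibV n := ⟨_, hw⟩
    have hadj : (fibCube n).Adj u w := hammingDist_self_update hi
    have hwv : hammingDist w.1 v.1 = d := by
      have : hammingDist w.1 v.1 + 1 = d + 1 := h ▸ hammingDist_update_add_one hi
      omega
    obtain ⟨p, hp⟩ := ih w hwv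
    exact ⟨.cons hadj p, by rw [SimpleGraph.Walk.length_cons, hp]⟩

theorem dist_fibCube (u v : FibV n) : (fibCube n).dist u v = hammingDist u.1 v.1 := by
  obtain ⟨p, hp⟩ := exists_walk_length_eq_hammingDist u v
  obtain ⟨q, hq⟩ := SimpleGraph.Reachable.exists_walk_length_eq_dist ⟨p⟩
  exact le_antisymm (hp ▸ SimpleGraph.dist_le p) (hq ▸ hammingDist_le_length q)

def IsFibList (l : List Bool) : Prop := l.IsChain fun a b => ¬(a = true ∧ b = true)

@[simp] theorem isFibList_nil : IsFibList [] := List.isChain_nil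

@[simp] theorem isFibList_singleton (a : Bool) : IsFibList [a] := List.isChain_singleton a

@[simp] theorem isFibList_false_cons {l : List Bool} : IsFibList (false :: l) ↔ IsFibList l := by
  cases l <;> simp [IsFibList]

@[simp] theorem not_isFibList_true_true_cons (l : List Bool) : ¬IsFibList (true :: true :: l) := by
  simp [IsFibList]

@[simp] theorem isFibList_true_false_cons {l : List Bool} :
    IsFibList (true :: false :: l) ↔ IsFibList l := by
  rw [← isFibList_false_cons (l := l)]
  simp [IsFibList]

def hamming : List Bool → List Bool → ℕ
  | a :: l, b :: m => (if a = b then 0 else 1) + hamming l m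
  | _, _ => 0

@[simp] theorem hamming_nil_left (v : List Bool) : hamming [] v = 0 := by
  cases v <;> rfl

@[simp] theorem hamming_nil_right (u : List Bool) : hamming u [] = 0 := by
  cases u <;> rfl

theorem hamming_cons_cons (a b : Bool) (l m : List Bool) :
    hamming (a :: l) (b :: m) = (if a = b then 0 else 1) + hamming l m := rfl

def ecc : List Bool → ℕ
  | [] => 0
  | true :: l => ecc l + 1
  | [false] => 1
  | false :: true :: l => ecc l + 2
  | false :: false :: l => ecc l + 1

def farthest : List Bool → List Bool
  | [] => []
  | true :: l => false :: farthest l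
  | [false] => [true]
  | false :: _ :: l => true :: false :: farthest l

theorem ecc_false_cons_bounds :
    ∀ l : List Bool, ecc l ≤ ecc (false :: l) ∧ ecc (false :: l) ≤ ecc l + 1
  | [] => by simp [ecc]
  | true :: l => by simp [ecc]
  | false :: l => by
    have := ecc_false_cons_bounds l
    simp only [ecc]
    omega

theorem hamming_le_ecc : ∀ (u : List Bool) {v : List Bool}, IsFibList v → hamming u v ≤ ecc u
  | [], _, _ => by simp
  | _ :: _, [], _ => by simp
  | true :: l, b :: v, hv => by
    have := hamming_le_ecc l (v := v) hv.tail
    rw [hamming_cons_cons, ecc]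
    split <;> omega
  | [false], b :: v, _ => by
    rw [hamming_cons_cons, ecc]
    split <;> simp
  | false :: c :: l, [b], _ => by
    rw [hamming_cons_cons, hamming_nil_right]
    cases c <;> split <;> simp [ecc]
  | false :: true :: l, b :: c :: v, hv => by
    have := hamming_le_ecc l (v := v) hv.tail.tail
    rw [hamming_cons_cons, hamming_cons_cons, ecc]
    split <;> split <;> omega
  | false :: false :: l, true :: true :: v, hv => absurd hv (not_isFibList_true_true_cons v)
  | false :: false :: l, true :: false :: v, hv => by
    have := hamming_le_ecc l (isFibList_true_false_cons.mp hv)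
    simp [hamming_cons_cons, ecc]
    omega
  | false :: false :: l, false :: c :: v, hv => by
    have ih := hamming_le_ecc (false :: l) (isFibList_false_cons.mp hv)
    have := (ecc_false_cons_bounds l).2
    rw [hamming_cons_cons, if_pos rfl, ecc]
    omega
termination_by u => u.length

theorem length_farthest : ∀ l : List Bool, (farthest l).length = l.length
  | [] => rfl
  | true :: l => by simp [farthest, length_farthest l]
  | [false] => rfl
  | false :: _ :: l => by simp [farthest, length_farthest l]

theorem isFibList_farthest : ∀ l : List Bool, IsFibList (farthest l)
  | [] => isFibList_nil
  | true :: l => by simpa [farthest] using isFibList_farthest l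
  | [false] => isFibList_singleton true
  | false :: _ :: l => by simpa [farthest] using isFibList_farthest l

theorem hamming_farthest : ∀ l : List Bool, hamming l (farthest l) = ecc l
  | [] => rfl
  | true :: l => by simp [farthest, hamming, ecc, hamming_farthest l, add_comm]
  | [false] => rfl
  | false :: true :: l => by simp [farthest, hamming, ecc, hamming_farthest l]; omega
  | false :: false :: l => by simp [farthest, hamming, ecc, hamming_farthest l, add_comm]

theorem isFibList_ofFn {u : Fin n → Bool} : IsFibList (List.ofFn u) ↔ FibPred n u := by
  rw [IsFibList, List.isChain_ofFn]
  constructor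
  · rintro h ⟨i, hi⟩ ⟨j, hj⟩ (rfl : j = i + 1)
    exact h i hj
  · exact fun h i hi => h _ _ rfl

theorem hammingDist_eq_hamming : ∀ {n : ℕ} (u v : Fin n → Bool),
    hammingDist u v = hamming (List.ofFn u) (List.ofFn v)
  | 0, u, v => by simp [hammingDist]
  | n + 1, u, v => by
    have ih := hammingDist_eq_hamming (fun i => u i.succ) (fun i => v i.succ)
    simp only [hammingDist, card_filter] at ih ⊢
    rw [Fin.sum_univ_succ, List.ofFn_succ, List.ofFn_succ, hamming_cons_cons, ← ih]
    by_cases h : u 0 = v 0 <;> simp [h]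

theorem gecc_fibCube (u : FibV n) : gecc (fibCube n) u = ecc (List.ofFn u.1) := by
  refine le_antisymm (Finset.sup_le fun v _ => ?_) ?_
  · rw [dist_fibCube, hammingDist_eq_hamming]
    exact hamming_le_ecc _ (isFibList_ofFn.mpr v.2)
  · obtain ⟨w, hw⟩ := List.exists_ofFn_eq ((length_farthest _).trans List.length_ofFn)
    let v : FibV n := ⟨w, isFibList_ofFn.mp (hw ▸ isFibList_farthest _)⟩
    calc ecc (List.ofFn u.1) = hamming (List.ofFn u.1) (List.ofFn w) := by
          rw [hw, hamming_farthest]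
      _ = (fibCube n).dist u v := by rw [dist_fibCube, hammingDist_eq_hamming]
      _ ≤ gecc (fibCube n) u := le_sup (mem_univ _)

def fibLists : ℕ → Finset (List Bool)
  | 0 => {[]}
  | 1 => {[false], [true]}
  | n + 2 =>
    (fibLists (n + 1)).image (false :: ·) ∪ (fibLists n).image (true :: false :: ·)

theorem mem_fibLists :
    ∀ {n : ℕ} {l : List Bool}, l ∈ fibLists n ↔ l.length = n ∧ IsFibList l
  | 0, l => by cases l <;> simp [fibLists]
  | 1, l => by rcases l with _ | ⟨_ | _, _ | _⟩ <;> simp [fibLists]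
  | n + 2, l => by
    rcases l with _ | ⟨_ | _, _ | ⟨_ | _, m⟩⟩ <;> simp [fibLists, mem_fibLists]

theorem sum_fibLists_add_two {M : Type*} [AddCommMonoid M] (n : ℕ) (f : List Bool → M) :
    ∑ l ∈ fibLists (n + 2), f l =
      ∑ l ∈ fibLists (n + 1), f (false :: l) +
        ∑ l ∈ fibLists n, f (true :: false :: l) := by
  rw [fibLists, sum_union, sum_image, sum_image] <;> simp [disjoint_left]

theorem card_fibLists : ∀ n, #(fibLists n) = Nat.fib (n + 2)
  | 0 => rfl
  | 1 => rfl
  | n + 2 => by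
    rw [card_eq_sum_ones, sum_fibLists_add_two, ← card_eq_sum_ones, ← card_eq_sum_ones,
      card_fibLists n, card_fibLists (n + 1), Nat.fib_add_two (n := n + 2), add_comm]

theorem sum_ecc_fibLists : ∀ n : ℕ,
    5 * ∑ l ∈ fibLists n, ecc l =
      3 * Nat.fib n + 4 * n * Nat.fib (n + 1) + 3 * n * Nat.fib n ∧
    5 * ∑ l ∈ fibLists n, ecc (false :: l) =
      5 * Nat.fib (n + 1) + 3 * Nat.fib n + 4 * n * Nat.fib (n + 1) + 3 * n * Nat.fib n
  | 0 => by decide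
  | 1 => by decide
  | n + 2 => by
    obtain ⟨hS₀, hT₀⟩ := sum_ecc_fibLists n
    obtain ⟨hS₁, hT₁⟩ := sum_ecc_fibLists (n + 1)
    have hC₀ := card_fibLists n
    have hC₁ := card_fibLists (n + 1)
    simp only [sum_fibLists_add_two, ecc, sum_add_distrib, sum_const, smul_eq_mul]
    simp only [Nat.fib_add_two] at *
    constructor <;> linarith

theorem sum_fibV_eq_sum_fibLists {M : Type*} [AddCommMonoid M] (n : ℕ) (f : List Bool → M) :
    ∑ u : FibV n, f (List.ofFn u.1) = ∑ l ∈ fibLists n, f l := by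
  refine sum_bij (fun u _ => List.ofFn u.1)
    (fun u _ => mem_fibLists.mpr ⟨List.length_ofFn, isFibList_ofFn.mpr u.2⟩)
    (fun u _ v _ h => Subtype.ext (List.ofFn_injective h)) (fun l hl => ?_) (fun _ _ => rfl)
  obtain ⟨hlen, hl⟩ := mem_fibLists.mp hl
  obtain ⟨w, rfl⟩ := List.exists_ofFn_eq hlen
  exact ⟨⟨w, isFibList_ofFn.mp hl⟩, mem_univ _, rfl⟩

end FibonacciCube

open FibonacciCube

/-- The sum of the eccentricities of all vertices of the Fibonacci cube Γ_n equals
(3F_n + 4nF_{n+1} + 3nF_n)/5. -/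
theorem sum_ecc_fibCube (n : ℕ) :
    ∑ u : FibV n, gecc (fibCube n) u =
      (3 * Nat.fib n + 4 * n * Nat.fib (n + 1) + 3 * n * Nat.fib n) / 5 := by
  have hsum : ∑ u : FibV n, gecc (fibCube n) u = ∑ l ∈ fibLists n, ecc l := by
    simp only [gecc_fibCube]
    exact sum_fibV_eq_sum_fibLists n ecc
  rw [hsum, ← (sum_ecc_fibLists n).1, Nat.mul_div_cancel_left _ (by norm_num)]
end

section
/- If {a_n} is a convergent sequence of complex numbers with limit ℓ, then (1/n) Σ_{i=1}^{n} a_i · a_{n+1-i} converges to ℓ² as n → ∞. -/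
/-!
Writing `u i * v (n - 1 - i) = (u i - l) * v (n - 1 - i) + l * v (n - 1 - i)`, the first part
has Cesàro mean at most `sup ‖v‖` times the Cesàro mean of `‖u i - l‖`, which tends to `0`, and
the second part is, after reversing the order of summation, `l` times the Cesàro mean of `v`,
which tends to `l * m`. The sum over `Icc 1 n` in the theorem is this convolution for the
shifted sequence `k ↦ a (k + 1)`.
-/

open Filter Finset Topology

theorem Filter.Tendsto.cesaro_smul_mul_of_bounded {A : Type*} [NormedRing A] [NormedSpace ℝ A]
    {x : ℕ → A} (hx : Tendsto x atTop (𝓝 0)) {y : ℕ → ℕ → A} {M : ℝ}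
    (hy : ∀ n i, ‖y n i‖ ≤ M) :
    Tendsto (fun n : ℕ => (n⁻¹ : ℝ) • ∑ i ∈ range n, x i * y n i) atTop (𝓝 0) := by
  have hmean : Tendsto (fun n : ℕ => M * ((n⁻¹ : ℝ) * ∑ i ∈ range n, ‖x i‖)) atTop (𝓝 0) := by
    simpa using (tendsto_norm_zero.comp hx).cesaro.const_mul M
  refine squeeze_zero_norm (fun n => ?_) hmean
  calc ‖(n⁻¹ : ℝ) • ∑ i ∈ range n, x i * y n i‖
      ≤ (n⁻¹ : ℝ) * ∑ i ∈ range n, ‖x i‖ * M := by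
        rw [norm_smul, Real.norm_of_nonneg (by positivity)]
        gcongr
        refine (norm_sum_le _ _).trans (sum_le_sum fun i _ => ?_)
        exact (norm_mul_le _ _).trans (by gcongr; exact hy n i)
    _ = M * ((n⁻¹ : ℝ) * ∑ i ∈ range n, ‖x i‖) := by
        rw [← sum_mul]; ring

theorem Filter.Tendsto.cesaro_smul_convolution {A : Type*} [NormedRing A] [NormedAlgebra ℝ A]
    {u v : ℕ → A} {l m : A} (hu : Tendsto u atTop (𝓝 l)) (hv : Tendsto v atTop (𝓝 m)) :
    Tendsto (fun n : ℕ => (n⁻¹ : ℝ) • ∑ i ∈ range n, u i * v (n - 1 - i)) atTop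
      (𝓝 (l * m)) := by
  obtain ⟨M, hM⟩ : ∃ M, ∀ j, ‖v j‖ ≤ M :=
    let ⟨M, hM⟩ := hv.norm.bddAbove_range
    ⟨M, fun j => hM ⟨j, rfl⟩⟩
  have herror := (tendsto_sub_nhds_zero_iff.2 hu).cesaro_smul_mul_of_bounded
    (y := fun n i => v (n - 1 - i)) fun n i => hM _
  have hmain := hv.cesaro_smul.const_mul l
  simpa only [sub_mul, sum_sub_distrib, smul_sub, ← mul_sum, mul_smul_comm, sum_range_reflect,
    sub_add_cancel, zero_add] using herror.add hmain

theorem sum_Icc_one_eq_sum_range_reflect {M : Type*} [AddCommMonoid M] (f : ℕ → ℕ → M)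
    (n : ℕ) : ∑ i ∈ Icc 1 n, f i (n + 1 - i) = ∑ k ∈ range n, f (k + 1) (n - 1 - k + 1) := by
  refine (sum_nbij' (· + 1) (· - 1) ?_ ?_ ?_ ?_ ?_).symm
  all_goals intro i hi
  all_goals simp only [mem_Icc, mem_range] at hi ⊢
  all_goals try omega
  congr 2; omega

/-- If {a_n} is a convergent complex sequence with limit ℓ, then
(1/n) Σ_{i=1}^n a_i a_{n+1-i} converges to ℓ². -/
theorem cesaro_product (a : ℕ → ℂ) (ℓ : ℂ) (ha : Filter.Tendsto a Filter.atTop (nhds ℓ)) :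
    Filter.Tendsto (fun n : ℕ => (1 / (n : ℂ)) * ∑ i ∈ Finset.Icc 1 n, a i * a (n + 1 - i))
      Filter.atTop (nhds (ℓ ^ 2)) := by
  have hshift : Tendsto (fun k => a (k + 1)) atTop (𝓝 ℓ) := ha.comp (tendsto_add_atTop_nat 1)
  have h := hshift.cesaro_smul_convolution hshift
  rw [← sq] at h
  refine h.congr fun n => ?_
  rw [sum_Icc_one_eq_sum_range_reflect fun i j => a i * a j, Complex.real_smul]
  push_cast
  ring
end

section
/- The number of edges of the Lucas cube Λ_n equals nF_{n-1} for n ≥ 1, where F_k denotes the Fibonacci numbers. -/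
open Finset

/-- Lucas strings: binary strings with no two cyclically consecutive 1's. -/
def LucasPred (n : ℕ) (v : Fin n → Bool) : Prop :=
  ∀ i j : Fin n, (j : ℕ) = ((i : ℕ) + 1) % n → ¬(v i = true ∧ v j = true)

instance (n : ℕ) : DecidablePred (LucasPred n) := fun v => by
  unfold LucasPred; infer_instance

/-- Vertices of the Lucas cube: Lucas strings of length n. -/
def LucasV (n : ℕ) := {v : Fin n → Bool // LucasPred n v}

instance (n : ℕ) : Fintype (LucasV n) := Subtype.fintype _
instance (n : ℕ) : DecidableEq (LucasV n) := Subtype.instDecidableEq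

/-- The Lucas cube Λ_n: Lucas strings adjacent iff they differ in exactly one position. -/
def lucasCube (n : ℕ) : SimpleGraph (LucasV n) where
  Adj u v := diffCount u.1 v.1 = 1
  symm := by
    constructor
    intro u v h
    have he : (Finset.univ.filter fun i => v.1 i ≠ u.1 i)
        = (Finset.univ.filter fun i => u.1 i ≠ v.1 i) := by
      apply Finset.filter_congr; intro i _; exact ne_comm
    simpa [diffCount, he] using h
  loopless := by constructor; intro u h; simp [diffCount] at h

instance (n : ℕ) : DecidableRel (lucasCube n).Adj := fun u v => Nat.decEq _ _

/-!
Every edge of `Λ_n` joins a string `v` to the string obtained from `v` by turning one of its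
`1`s into a `0`, so the edges correspond to the pairs `(i, v)` with `v i = 1`. Rotations are
automorphisms of `Λ_n`, so each position `i` carries as many such `v` as position `0` does; and a
Lucas string with `v 0 = 1` has the shape `1 0 u 0` with `u` an arbitrary Fibonacci string of
length `n - 3`, of which there are `F_{n-1}`.
-/

theorem card_filter_eq_sum_card_filter_cons {α : Type*} [Fintype α] {m : ℕ}
    (p : (Fin (m + 1) → α) → Prop) [DecidablePred p] :
    #{v | p v} = ∑ a, #{w : Fin m → α | p (Fin.cons a w)} := by
  simp only [card_filter]
  rw [← (Fin.consEquiv fun _ => α).sum_comp, Fintype.sum_prod_type]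
  rfl

theorem card_filter_eq_sum_card_filter_snoc {α : Type*} [Fintype α] {m : ℕ}
    (p : (Fin (m + 1) → α) → Prop) [DecidablePred p] :
    #{v | p v} = ∑ a, #{w : Fin m → α | p (Fin.snoc w a)} := by
  simp only [card_filter]
  rw [← (Fin.snocEquiv fun _ => α).sum_comp, Fintype.sum_prod_type]
  rfl

theorem fibPred_succ_iff {m : ℕ} (v : Fin (m + 1) → Bool) :
    FibPred (m + 1) v ↔ ∀ i : Fin m, ¬(v i.castSucc = true ∧ v i.succ = true) := by
  refine ⟨fun h i => h _ _ rfl, fun h i j hij => ?_⟩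
  have hi : (i : ℕ) < m := by omega
  obtain rfl : j = (⟨i, hi⟩ : Fin m).succ := Fin.ext hij
  exact h ⟨i, hi⟩

theorem fibPred_zero (v : Fin 0 → Bool) : FibPred 0 v := fun i => i.elim0

theorem fibPred_one (v : Fin 1 → Bool) : FibPred 1 v := (fibPred_succ_iff v).2 finZeroElim

theorem fibPred_cons_iff {m : ℕ} (b : Bool) (w : Fin (m + 1) → Bool) :
    FibPred (m + 2) (Fin.cons b w) ↔ ¬(b = true ∧ w 0 = true) ∧ FibPred (m + 1) w := by
  rw [fibPred_succ_iff, fibPred_succ_iff, Fin.forall_fin_succ]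
  simp

theorem fibPred_cons_false {m : ℕ} (w : Fin m → Bool) :
    FibPred (m + 1) (Fin.cons false w) ↔ FibPred m w := by
  cases m with
  | zero => exact iff_of_true (fibPred_one _) (fibPred_zero _)
  | succ k => simp [fibPred_cons_iff]

theorem fibPred_snoc_false {m : ℕ} (w : Fin m → Bool) :
    FibPred (m + 1) (Fin.snoc w false) ↔ FibPred m w := by
  cases m with
  | zero => exact iff_of_true (fibPred_one _) (fibPred_zero _)
  | succ k =>
    rw [fibPred_succ_iff, fibPred_succ_iff, Fin.forall_fin_succ']
    simp [Fin.succ_castSucc, -Fin.castSucc_succ]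

theorem card_filter_fibPred (m : ℕ) : #{v : Fin m → Bool | FibPred m v} = Nat.fib (m + 2) := by
  induction m using Nat.twoStepInduction with
  | zero => decide
  | one => decide
  | more k ih₀ ih₁ =>
    rw [card_filter_eq_sum_card_filter_cons, Fintype.sum_bool]
    simp only [fibPred_cons_iff]
    rw [card_filter_eq_sum_card_filter_cons, Fintype.sum_bool]
    simp [fibPred_cons_false, ih₀, ih₁, Nat.fib_add_two]

theorem lucasPred_iff_add_one {n : ℕ} [NeZero n] (v : Fin n → Bool) :
    LucasPred n v ↔ ∀ i : Fin n, ¬(v i = true ∧ v (i + 1) = true) := by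
  have hsucc (i j : Fin n) : (j : ℕ) = ((i : ℕ) + 1) % n ↔ j = i + 1 := by
    rw [Fin.ext_iff, Fin.val_add, Fin.val_one', Nat.add_mod_mod]
  simp only [LucasPred, hsucc, forall_eq]

theorem lucasPred_succ_iff {m : ℕ} (v : Fin (m + 1) → Bool) :
    LucasPred (m + 1) v ↔ FibPred (m + 1) v ∧ ¬(v (Fin.last m) = true ∧ v 0 = true) := by
  rw [lucasPred_iff_add_one, Fin.forall_fin_succ', fibPred_succ_iff]
  simp [Fin.coeSucc_eq_succ, Fin.last_add_one]

theorem lucasPred_cons_true {m : ℕ} (w : Fin (m + 1) → Bool) :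
    LucasPred (m + 2) (Fin.cons true w) ↔
      w 0 = false ∧ w (Fin.last m) = false ∧ FibPred (m + 1) w := by
  rw [lucasPred_succ_iff, fibPred_cons_iff]
  simp only [true_and, Bool.not_eq_true, Fin.cons_last, Fin.cons_zero, and_true]
  tauto

theorem card_filter_lucasPred_zero_true (m : ℕ) :
    #{v : Fin (m + 1) → Bool | LucasPred (m + 1) v ∧ v 0 = true} = Nat.fib m := by
  rcases m with _ | _ | k
  · decide
  · decide
  rw [card_filter_eq_sum_card_filter_cons, Fintype.sum_bool]
  simp only [lucasPred_cons_true, Fin.cons_zero]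
  rw [card_filter_eq_sum_card_filter_cons, Fintype.sum_bool]
  simp only [Fin.cons_zero, Fin.cons_last, fibPred_cons_false, Bool.true_eq_false,
    Bool.false_eq_true, true_and, false_and, and_false, and_true, filter_false, card_empty,
    zero_add, add_zero]
  rw [card_filter_eq_sum_card_filter_snoc, Fintype.sum_bool]
  simp [fibPred_snoc_false, card_filter_fibPred]

theorem lucasPred_comp_add_right {n : ℕ} [NeZero n] {v : Fin n → Bool} (hv : LucasPred n v)
    (c : Fin n) : LucasPred n (fun j => v (j + c)) := by
  rw [lucasPred_iff_add_one] at hv ⊢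
  intro i
  simpa only [add_right_comm] using hv (i + c)

theorem LucasV.ext {n : ℕ} {u v : LucasV n} (h : u.1 = v.1) : u = v := Subtype.ext h

def LucasV.rotate {n : ℕ} [NeZero n] (c : Fin n) (v : LucasV n) : LucasV n :=
  ⟨fun j => v.1 (j + c), lucasPred_comp_add_right v.2 c⟩

@[simp]
theorem LucasV.rotate_apply {n : ℕ} [NeZero n] (c : Fin n) (v : LucasV n) (j : Fin n) :
    (v.rotate c).1 j = v.1 (j + c) := rfl

theorem card_filter_lucasV_apply_eq {n : ℕ} [NeZero n] (i : Fin n) :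
    #{v : LucasV n | v.1 i = true} = #{v : LucasV n | v.1 0 = true} := by
  refine card_nbij' (LucasV.rotate i) (LucasV.rotate (-i)) ?_ ?_ ?_ ?_
  · intro v hv; simpa using hv
  · intro v hv; simpa using hv
  · intro v _; exact LucasV.ext (funext fun j => by simp)
  · intro v _; exact LucasV.ext (funext fun j => by simp)

theorem card_filter_lucasV_apply_zero (m : ℕ) :
    #{v : LucasV (m + 1) | v.1 0 = true} = Nat.fib m := by
  show #({v | v.1 0 = true} : Finset {v // LucasPred (m + 1) v}) = _
  rw [← card_filter_lucasPred_zero_true, ← card_map (Function.Embedding.subtype _)]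
  congr 1
  ext v
  simp [and_comm]

theorem card_filter_ne_eq_one_iff {ι : Type*} [Fintype ι] [DecidableEq ι] (u v : ι → Bool) :
    #{i | u i ≠ v i} = 1 ↔ ∃ i, v = Function.update u i (!u i) := by
  simp only [card_eq_one, Finset.ext_iff, mem_filter, mem_univ, true_and, mem_singleton,
    funext_iff]
  refine exists_congr fun i => forall_congr' fun j => ?_
  by_cases hj : j = i
  · subst hj; cases u j <;> cases v j <;> simp
  · simp [hj, eq_comm]

theorem lucasPred_update_false {n : ℕ} {v : Fin n → Bool} (hv : LucasPred n v) (i : Fin n) :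
    LucasPred n (Function.update v i false) := by
  intro a b hab ⟨ha, hb⟩
  refine hv a b hab ⟨?_, ?_⟩
  · by_cases h : a = i <;> simp_all
  · by_cases h : b = i <;> simp_all

def LucasV.clear {n : ℕ} (v : LucasV n) (i : Fin n) : LucasV n :=
  ⟨Function.update v.1 i false, lucasPred_update_false v.2 i⟩

theorem lucasCube_adj_clear {n : ℕ} {v : LucasV n} {i : Fin n} (hv : v.1 i = true) :
    (lucasCube n).Adj v (v.clear i) :=
  (card_filter_ne_eq_one_iff _ _).2 ⟨i, by simp [LucasV.clear, hv]⟩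

theorem card_edgeFinset_lucasCube (n : ℕ) :
    #(lucasCube n).edgeFinset = #{p : Fin n × LucasV n | p.2.1 p.1 = true} := by
  symm
  refine card_bij (fun p _ => s(p.2, p.2.clear p.1)) ?_ ?_ ?_
  · intro p hp
    exact SimpleGraph.mem_edgeFinset.2 (lucasCube_adj_clear (mem_filter.1 hp).2)
  · rintro ⟨i, v⟩ hv ⟨j, w⟩ hw h
    simp only [mem_filter, mem_univ, true_and] at hv hw
    dsimp only at h
    rcases Sym2.eq_iff.1 h with ⟨rfl, hc⟩ | ⟨rfl, hc⟩
    · have hci := congrArg (fun u : LucasV n => u.1 i) hc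
      by_cases hij : i = j
      · rw [hij]
      · simp [LucasV.clear, hij, hv] at hci
    · have hwj : w.1 j = false := by
        rw [← hc]
        simp [LucasV.clear, Function.update_apply]
      simp [hw] at hwj
  · intro e he
    induction e using Sym2.ind with
    | _ u v =>
    obtain ⟨i, hi⟩ : ∃ i, v.1 = Function.update u.1 i (!u.1 i) :=
      (card_filter_ne_eq_one_iff _ _).1 (SimpleGraph.mem_edgeFinset.1 he)
    cases hu : u.1 i
    · refine ⟨(i, v), by simp [hi, hu], ?_⟩
      rw [Sym2.eq_swap]
      congr
      refine LucasV.ext (funext fun j => ?_)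
      by_cases hj : j = i <;> simp_all [LucasV.clear]
    · refine ⟨(i, u), by simp [hu], ?_⟩
      congr
      refine LucasV.ext (funext fun j => ?_)
      by_cases hj : j = i <;> simp_all [LucasV.clear]

theorem card_edges_lucasCube_general (n : ℕ) :
    (lucasCube n).edgeFinset.card = n * Nat.fib (n - 1) := by
  rw [card_edgeFinset_lucasCube, card_filter, Fintype.sum_prod_type]
  simp only [← card_filter]
  rcases n with _ | m
  · simp
  · simp [card_filter_lucasV_apply_eq, card_filter_lucasV_apply_zero]

/-- The number of edges of the Lucas cube Λ_n equals nF_{n-1} for n ≥ 1. -/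
theorem card_edges_lucasCube (n : ℕ) (hn : 1 ≤ n) :
    (lucasCube n).edgeFinset.card = n * Nat.fib (n - 1) :=
  card_edges_lucasCube_general n
end

section
/- The average degree of the Fibonacci cube Γ_n, divided by n, converges to (5−√5)/5 as n → ∞. -/
/-!
A Fibonacci string of length `n + 2` is `0w` with `w ∈ Γ_{n+1}` or `10w` with `w ∈ Γ_n`. The
two parts span copies of `Γ_{n+1}` and `Γ_n`, and the only edges between them are `00w ~ 10w`.
Hence `|V(Γ_n)| = F_{n+2}` and the degree sums satisfy `D_{n+2} = D_{n+1} + D_n + 2 F_{n+2}`,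
which is solved by `5 D_n = 2 n F_{n+1} + 4 (n + 1) F_n`. Dividing by `n F_{n+2}` and using
`F_n / F_{n+1} → -ψ` gives the limit `(2/5)(-ψ) + (4/5) ψ² = (5 - √5)/5`.
-/

open Finset

namespace FibPred

variable {n : ℕ}

theorem tail {v : Fin (n + 1) → Bool} (h : FibPred (n + 1) v) : FibPred n (Fin.tail v) :=
  fun i j hij => h i.succ j.succ (by simpa using hij)

theorem cons_false {v : Fin n → Bool} (h : FibPred n v) : FibPred (n + 1) (Fin.cons false v) := by
  intro i j hij
  cases j using Fin.cases with
  | zero => simp at hij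
  | succ j =>
    cases i using Fin.cases with
    | zero => simp
    | succ i => simpa using h i j (by simpa using hij)

theorem cons_true {v : Fin (n + 1) → Bool} (h : FibPred (n + 1) v) (h0 : v 0 = false) :
    FibPred (n + 2) (Fin.cons true v) := by
  intro i j hij
  cases j using Fin.cases with
  | zero => simp at hij
  | succ j =>
    cases i using Fin.cases with
    | zero =>
      obtain rfl : j = 0 := Fin.ext (by simpa using hij)
      simp [h0]
    | succ i => simpa using h i j (by simpa using hij)

theorem apply_one_eq_false {v : Fin (n + 2) → Bool} (h : FibPred (n + 2) v) (h0 : v 0 = true) :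
    v 1 = false := by
  simpa [h0] using h 0 1 rfl

end FibPred

namespace FibV

variable {n : ℕ}

def tail (v : FibV (n + 1)) : FibV n := ⟨Fin.tail v.1, v.2.tail⟩

def cons0 (v : FibV n) : FibV (n + 1) := ⟨Fin.cons false v.1, v.2.cons_false⟩

def cons10 (v : FibV n) : FibV (n + 2) := ⟨Fin.cons true (cons0 v).1, (cons0 v).2.cons_true rfl⟩

theorem ext_iff {u v : FibV n} : u = v ↔ u.1 = v.1 := Subtype.ext_iff

theorem val_cons0 (v : FibV n) : (cons0 v).1 = Fin.cons false v.1 := rfl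

theorem val_cons10 (v : FibV n) : (cons10 v).1 = Fin.cons true (Fin.cons false v.1) := rfl

theorem cons0_tail {v : FibV (n + 1)} (h0 : v.1 0 = false) : cons0 v.tail = v :=
  Subtype.ext <| show Fin.cons false (Fin.tail v.1) = v.1 by rw [← h0, Fin.cons_self_tail]

theorem cons10_tail_tail {v : FibV (n + 2)} (h0 : v.1 0 = true) : cons10 v.tail.tail = v := by
  have h1 : Fin.tail v.1 0 = false := v.2.apply_one_eq_false h0
  exact Subtype.ext <| show Fin.cons true (Fin.cons false (Fin.tail (Fin.tail v.1))) = v.1 by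
    rw [← h0, ← h1, Fin.cons_self_tail, Fin.cons_self_tail]

def consEquiv (n : ℕ) : FibV (n + 1) ⊕ FibV n ≃ FibV (n + 2) where
  toFun := Sum.elim cons0 cons10
  invFun v := if v.1 0 then .inr v.tail.tail else .inl v.tail
  left_inv := by rintro (s | t) <;> rfl
  right_inv v := by
    cases h0 : v.1 0
    · simp only [h0]; exact cons0_tail h0
    · simp only [h0]; exact cons10_tail_tail h0

end FibV

theorem diffCount_cons {n : ℕ} (a b : Bool) (u v : Fin n → Bool) :
    diffCount (Fin.cons a u : Fin (n + 1) → Bool) (Fin.cons b v) =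
      (if a = b then 0 else 1) + diffCount u v := by
  simp only [diffCount, Finset.card_filter, Fin.sum_univ_succ, Fin.cons_zero, Fin.cons_succ]
  split_ifs <;> simp_all

theorem diffCount_eq_zero_iff {n : ℕ} {u v : Fin n → Bool} : diffCount u v = 0 ↔ u = v := by
  simp [diffCount, Finset.filter_eq_empty_iff, funext_iff]

namespace fibCube

open FibV

variable {n : ℕ}

theorem adj_iff {u v : FibV n} : (fibCube n).Adj u v ↔ diffCount u.1 v.1 = 1 := Iff.rfl

theorem adj_cons0 {u v : FibV n} :
    (fibCube (n + 1)).Adj u.cons0 v.cons0 ↔ (fibCube n).Adj u v := by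
  simp only [adj_iff, val_cons0, diffCount_cons, if_true, zero_add]

theorem adj_cons10 {u v : FibV n} :
    (fibCube (n + 2)).Adj u.cons10 v.cons10 ↔ (fibCube n).Adj u v := by
  simp only [adj_iff, val_cons10, diffCount_cons, if_true, zero_add]

theorem adj_cons10_cons0 {t : FibV n} {s : FibV (n + 1)} :
    (fibCube (n + 2)).Adj t.cons10 s.cons0 ↔ t.cons0 = s := by
  rw [adj_iff, val_cons10, val_cons0, diffCount_cons, FibV.ext_iff, val_cons0,
    if_neg (by decide), add_eq_left, diffCount_eq_zero_iff]

theorem adj_cons0_cons10 {s : FibV (n + 1)} {t : FibV n} :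
    (fibCube (n + 2)).Adj s.cons0 t.cons10 ↔ t.cons0 = s := by
  rw [SimpleGraph.adj_comm, adj_cons10_cons0]

end fibCube

theorem card_fibV_eq_fib (n : ℕ) : Fintype.card (FibV n) = Nat.fib (n + 2) := by
  induction n using Nat.twoStepInduction with
  | zero => decide
  | one => decide
  | more n ih₀ ih₁ =>
    rw [← Fintype.card_congr (FibV.consEquiv n), Fintype.card_sum, ih₀, ih₁, add_comm,
      ← Nat.fib_add_two]

theorem SimpleGraph.sum_degree_eq_sum_sum_ite {V : Type*} [Fintype V] (G : SimpleGraph V)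
    [DecidableRel G.Adj] : ∑ v, G.degree v = ∑ u, ∑ v, if G.Adj u v then 1 else 0 := by
  simp only [← G.card_neighborFinset_eq_degree, G.neighborFinset_eq_filter, Finset.card_filter]

theorem sum_degree_fibCube_add_two (n : ℕ) :
    ∑ u, (fibCube (n + 2)).degree u =
      ∑ u, (fibCube (n + 1)).degree u + ∑ u, (fibCube n).degree u +
        2 * Fintype.card (FibV n) := by
  simp only [SimpleGraph.sum_degree_eq_sum_sum_ite]
  rw [← (FibV.consEquiv n).sum_comp]
  simp only [← (FibV.consEquiv n).sum_comp, Fintype.sum_sum_type, FibV.consEquiv,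
    Equiv.coe_fn_mk, Sum.elim_inl, Sum.elim_inr, fibCube.adj_cons0, fibCube.adj_cons10,
    fibCube.adj_cons0_cons10, fibCube.adj_cons10_cons0, Finset.sum_add_distrib]
  have hcross : ∑ t : FibV n, ∑ s : FibV (n + 1), (if t.cons0 = s then 1 else 0) =
      Fintype.card (FibV n) := by
    simp
  rw [Finset.sum_comm (f := fun s t => if FibV.cons0 t = s then 1 else 0), hcross]
  ring

theorem five_mul_sum_degree_fibCube (n : ℕ) :
    5 * ∑ u, (fibCube n).degree u = 2 * n * Nat.fib (n + 1) + 4 * (n + 1) * Nat.fib n := by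
  induction n using Nat.twoStepInduction with
  | zero => decide
  | one => decide
  | more n ih₀ ih₁ =>
    have hfib₂ : Nat.fib n + Nat.fib (n + 1) = Nat.fib (n + 2) := (Nat.fib_add_two).symm
    have hfib₃ : Nat.fib (n + 1) + Nat.fib (n + 2) = Nat.fib (n + 3) := (Nat.fib_add_two).symm
    rw [sum_degree_fibCube_add_two, card_fibV_eq_fib]
    linear_combination ih₀ + ih₁ + (2 * n + 4) * hfib₃ + (4 * n + 4) * hfib₂

open Filter Topology Real goldenRatio

theorem tendsto_fib_div_fib_add_two_atTop :
    Tendsto (fun n ↦ (Nat.fib n / Nat.fib (n + 2) : ℝ)) atTop (𝓝 (ψ ^ 2)) := by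
  have h := tendsto_fib_div_fib_succ_atTop.mul
    (tendsto_fib_div_fib_succ_atTop.comp (tendsto_add_atTop_nat 1))
  rw [neg_mul_neg, ← sq] at h
  exact h.congr fun n ↦ div_mul_div_cancel₀ (Nat.cast_ne_zero.2 (Nat.fib_pos.2 n.succ_pos).ne')

theorem sum_degree_fibCube_div_card_div_eq {n : ℕ} (hn : n ≠ 0) :
    ((∑ u : FibV n, (fibCube n).degree u : ℕ) : ℝ) / (Fintype.card (FibV n)) / n =
      2 / 5 * (Nat.fib (n + 1) / Nat.fib (n + 2)) +
        4 / 5 * (1 + 1 / n) * (Nat.fib n / Nat.fib (n + 2)) := by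
  have h5 : (5 : ℝ) * (∑ u : FibV n, (fibCube n).degree u : ℕ) =
      2 * n * Nat.fib (n + 1) + 4 * (n + 1) * Nat.fib n := by
    exact_mod_cast five_mul_sum_degree_fibCube n
  have hfib : (Nat.fib (n + 2) : ℝ) ≠ 0 := Nat.cast_ne_zero.2 (Nat.fib_pos.2 (by omega)).ne'
  rw [card_fibV_eq_fib]
  field_simp
  linear_combination h5

/-- The average degree of Γ_n, divided by n, converges to (5-√5)/5. -/
theorem avg_deg_fibCube_tendsto :
    Filter.Tendsto
      (fun n : ℕ =>
        ((∑ u : FibV n, (fibCube n).degree u : ℕ) : ℝ) / (Fintype.card (FibV n)) / n)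
      Filter.atTop (nhds ((5 - Real.sqrt 5) / 5)) := by
  have hratio : Tendsto (fun n ↦ (Nat.fib (n + 1) / Nat.fib (n + 2) : ℝ)) atTop (𝓝 (-ψ)) :=
    tendsto_fib_div_fib_succ_atTop.comp (tendsto_add_atTop_nat 1)
  have hlim := (hratio.const_mul (2 / 5)).add
    ((((tendsto_const_div_atTop_nhds_zero_nat (1 : ℝ)).const_add 1).const_mul (4 / 5)).mul
      tendsto_fib_div_fib_add_two_atTop)
  have hval : 2 / 5 * -ψ + 4 / 5 * (1 + 0) * ψ ^ 2 = (5 - √5) / 5 := by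
    rw [goldenConj_sq]
    ring
  rw [hval] at hlim
  refine hlim.congr' ?_
  filter_upwards [eventually_ne_atTop 0] with n hn
  exact (sum_degree_fibCube_div_card_div_eq hn).symm
end
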